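/- Let 1 ≤ k < n. Then (n,k) is reachable from (1,1) under the maps Ĝ(x,y)=(x+y,y) and Ŝ(x,y)=(3x−2y+1,2x−y+1) if and only if (n−k, h) is reachable, where h is the remainder of k upon division by 2n−2k+1 (equivalently h ≡ k mod (2n−2k+1) with 0 ≤ h ≤ 2n−2k). Here (0,0) and (1,1) are declared reachable. -/

import Mathlib

/-!
`Ŝ(x, y) = (x + c, y + c)` with `c = 2(x - y) + 1`: it slides a point along its diagonal
`x - y = d` by steps of `2d + 1`, while `Ĝ(x, y) = (x + y, y)` enters the diagonal `x - y = x`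
at height `y ≤ x < 2x + 1`. So a generated point `(n, k)` with `k < n` is reached by entering
the diagonal `d = n - k` at height `k mod (2d + 1)` from the generated point `(d, k mod (2d + 1))`,
and conversely every such entry can be slid up to `(n, k)`.
-/

def Ghat (p : ℤ × ℤ) : ℤ × ℤ := (p.1 + p.2, p.2)

def Shat (p : ℤ × ℤ) : ℤ × ℤ := (3 * p.1 - 2 * p.2 + 1, 2 * p.1 - p.2 + 1)

def applyWord (w : List Bool) (p : ℤ × ℤ) : ℤ × ℤ :=
  w.foldr (fun b q => if b then Shat q else Ghat q) p

/-- `(0,0)` is reachable, and so is anything obtained from `(1,1)` by a word in `Ĝ, Ŝ`. -/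
def Reachable (p : ℤ × ℤ) : Prop :=
  p = (0, 0) ∨ ∃ w : List Bool, applyWord w (1, 1) = p

lemma Shat_eq_add_diag (x y : ℤ) :
    Shat (x, y) = (x + (2 * (x - y) + 1), y + (2 * (x - y) + 1)) := by
  simp only [Shat, Prod.mk.injEq]
  constructor <;> ring

inductive Generated : ℤ × ℤ → Prop
  | one_one : Generated (1, 1)
  | ghat {p : ℤ × ℤ} : Generated p → Generated (Ghat p)
  | shat {p : ℤ × ℤ} : Generated p → Generated (Shat p)

lemma generated_iff_exists_applyWord {p : ℤ × ℤ} :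
    Generated p ↔ ∃ w : List Bool, applyWord w (1, 1) = p := by
  constructor
  · intro hp
    induction hp with
    | one_one => exact ⟨[], rfl⟩
    | ghat _ ih => obtain ⟨w, rfl⟩ := ih; exact ⟨false :: w, rfl⟩
    | shat _ ih => obtain ⟨w, rfl⟩ := ih; exact ⟨true :: w, rfl⟩
  · rintro ⟨w, rfl⟩
    induction w with
    | nil => exact .one_one
    | cons b w ih =>
      cases b
      · exact ih.ghat
      · exact ih.shat

namespace Generated

lemma one_le_snd_le_fst {p : ℤ × ℤ} (hp : Generated p) : 1 ≤ p.2 ∧ p.2 ≤ p.1 := by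
  induction hp with
  | one_one => decide
  | ghat _ ih => simp only [Ghat]; omega
  | shat _ ih => simp only [Shat]; omega

lemma slide {x y : ℤ} (hp : Generated (x, y)) (j : ℕ) :
    Generated (x + j * (2 * (x - y) + 1), y + j * (2 * (x - y) + 1)) := by
  induction j with
  | zero => simpa using hp
  | succ j ih =>
    have step := ih.shat
    rw [Shat_eq_add_diag] at step
    convert step using 2 <;> push_cast <;> ring

lemma reduce {p : ℤ × ℤ} (hp : Generated p) (hlt : p.2 < p.1) :
    Generated (p.1 - p.2, p.2 % (2 * (p.1 - p.2) + 1)) := by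
  induction hp with
  | one_one => exact absurd hlt (by decide)
  | @ghat q hq _ =>
    obtain ⟨hq₁, hq₂⟩ := hq.one_le_snd_le_fst
    simp only [Ghat, add_sub_cancel_right]
    rwa [Int.emod_eq_of_lt (by omega) (by omega)]
  | @shat q _ ih =>
    obtain ⟨x, y⟩ := q
    rw [Shat_eq_add_diag] at hlt ⊢
    simp only [add_sub_add_right_eq_sub, Int.add_emod_right] at hlt ⊢
    exact ih (by simpa using hlt)

end Generated

lemma reachable_iff_generated {p : ℤ × ℤ} (hp : p ≠ (0, 0)) : Reachable p ↔ Generated p := by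
  simp [Reachable, generated_iff_exists_applyWord, hp]

theorem modular_recursion (n k : ℤ) (hk : 1 ≤ k) (hkn : k < n) :
    Reachable (n, k) ↔ Reachable (n - k, k % (2 * n - 2 * k + 1)) := by
  rw [reachable_iff_generated (by simp only [ne_eq, Prod.mk.injEq]; omega),
    reachable_iff_generated (by simp only [ne_eq, Prod.mk.injEq]; omega),
    show 2 * n - 2 * k + 1 = 2 * (n - k) + 1 by ring]
  refine ⟨fun h => h.reduce hkn, fun h => ?_⟩
  set c := 2 * (n - k) + 1
  obtain ⟨j, hj⟩ : ∃ j : ℕ, (j : ℤ) = k / c := ⟨(k / c).toNat, Int.toNat_of_nonneg (by positivity)⟩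
  have hdiv := Int.emod_add_mul_ediv k c
  convert h.ghat.slide j using 2 <;> simp only [add_sub_cancel_right, hj] <;> linarith
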